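/- For the 19-tile Wang set U defined in the paper, the set R = {u₀, u₁, u₂, u₃, u₄, u₅, u₆, u₇} is a set of markers in direction e₂: no two tiles of R are vertically adjacent in any valid tiling, and no tile of R is horizontally adjacent to a tile of U∖R. -/
import Mathlib


/-- The colors used by the Wang tile set `U`:
vertical colors `A,…,J` and horizontal colors `K,…,P`. -/
inductive UC : Type
  | A | B | C | D | E | F | G | H | I | J | K | L | M | N | O | P
deriving DecidableEq

open UC

/-- Right colors of the 19 tiles of `U`. -/
def Ur : Fin 19 → UC :=
  ![F, F, J, D, H, H, H, H, B, G, G, A, E, E, I, I, I, I, C]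

/-- Top colors of the 19 tiles of `U`. -/
def Ut : Fin 19 → UC :=
  ![O, O, M, M, P, P, K, K, O, L, L, L, P, P, P, P, K, K, N]

/-- Left colors of the 19 tiles of `U`. -/
def Ul : Fin 19 → UC :=
  ![J, H, F, F, J, H, F, D, I, E, C, I, G, I, G, I, B, A, I]

/-- Bottom colors of the 19 tiles of `U`. -/
def Ub : Fin 19 → UC :=
  ![O, L, P, K, P, N, P, P, O, O, L, O, P, P, K, K, M, K, P]

/-- A valid Wang tiling of the plane by the tile set `U`. -/
def ValidU (x : ℤ × ℤ → Fin 19) : Prop :=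
  ∀ p : ℤ × ℤ, Ur (x p) = Ul (x (p.1 + 1, p.2)) ∧
    Ut (x p) = Ub (x (p.1, p.2 + 1))

/-- The subset `R = {u₀,…,u₇}` of `U`. -/
def RU : Set (Fin 19) := {i | i.1 ≤ 7}

/-- A rank function on the upper tile of a vertically adjacent pair of
`R`-tiles; it strictly decreases when moving one step to the right. -/
def rkU (b : Fin 19) : ℕ :=
  if b = 2 then 3 else if b = 0 then 2 else if b = 3 then 1 else 0

lemma rkU_le (b : Fin 19) : rkU b ≤ 3 := by
  unfold rkU; split <;> [skip; split] <;> [omega; omega; split <;> omega]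

lemma horizR : ∀ i j : Fin 19, Ur i = Ul j → (i.1 ≤ 7 ↔ j.1 ≤ 7) := by decide

set_option maxHeartbeats 4000000 in
lemma rk_dec : ∀ a b a' b' : Fin 19, a.1 ≤ 7 → b.1 ≤ 7 → a'.1 ≤ 7 → b'.1 ≤ 7 →
    Ut a = Ub b → Ut a' = Ub b' → Ur a = Ul a' → Ur b = Ul b' →
    rkU b' < rkU b := by decide

lemma stepR (x : ℤ × ℤ → Fin 19) (hx : ValidU x) (q : ℤ × ℤ)
    (ha : (x q).1 ≤ 7) (hb : (x (q.1, q.2 + 1)).1 ≤ 7) :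
    (x (q.1 + 1, q.2)).1 ≤ 7 ∧ (x (q.1 + 1, q.2 + 1)).1 ≤ 7 ∧
      rkU (x (q.1 + 1, q.2 + 1)) < rkU (x (q.1, q.2 + 1)) := by
  have h1 := (hx q).1
  have h2 := (hx q).2
  have h3 := (hx (q.1, q.2 + 1)).1
  have h4 := (hx (q.1 + 1, q.2)).2
  have ha' : (x (q.1 + 1, q.2)).1 ≤ 7 := (horizR _ _ h1).mp ha
  exact ⟨ha', (horizR _ _ h3).mp hb, rk_dec _ _ _ _ ha hb ha' ((horizR _ _ h3).mp hb) h2 h4 h1 h3⟩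

/-- `R = {u₀,…,u₇}` is a set of markers of `U` in direction `e₂`: in every
valid tiling, two tiles of `R` are never vertically adjacent, and a tile of
`R` is horizontally adjacent only to tiles of `R` (never to a tile of
`U ∖ R`, in either order). -/
theorem RU_isMarkers :
    ∀ x : ℤ × ℤ → Fin 19, ValidU x → ∀ p : ℤ × ℤ,
      ¬(x p ∈ RU ∧ x (p.1, p.2 + 1) ∈ RU) ∧
      (x p ∈ RU ↔ x (p.1 + 1, p.2) ∈ RU) := by
  intro x hx p
  constructor
  · rintro ⟨h0, h1⟩
    have h0 : (x p).1 ≤ 7 := h0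
    have h1 : (x (p.1, p.2 + 1)).1 ≤ 7 := h1
    have s0 := stepR x hx p h0 h1
    have s1 := stepR x hx (p.1 + 1, p.2) s0.1 s0.2.1
    dsimp only at s1
    have s2 := stepR x hx (p.1 + 1 + 1, p.2) s1.1 s1.2.1
    dsimp only at s2
    have s3 := stepR x hx (p.1 + 1 + 1 + 1, p.2) s2.1 s2.2.1
    dsimp only at s3
    have hle := rkU_le (x (p.1, p.2 + 1))
    omega
  · have h := (hx p).1
    exact horizR _ _ h
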